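/- arXiv:2209.06706 — 2 statements merged into one kernel-verified Lean document; each statement's English description precedes it below -/
import Mathlib

section
/- An increasing union of open balls in ℝ² whose radii are bounded is an open ball: if (B_k) is a sequence of open balls in ℝ² with B_k ⊆ B_{k+1} for all k and sup_k radius(B_k) < ∞, and the union has positive finite measure, then ∪_k B_k is an open ball. -/
open MeasureTheory Metric Real Set

local notation "E" => EuclideanSpace ℝ (Fin 2)

/-- If an open ball of positive radius is contained in another, then
`dist a b + ra ≤ rb`. -/
lemma key_ball_sub {a b : E} {ra rb : ℝ} (hra : 0 < ra)
    (h : ball a ra ⊆ ball b rb) : dist a b + ra ≤ rb := by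
  -- choose a unit vector in the direction of a - b
  obtain ⟨u, hu, hsum⟩ : ∃ u : E, ‖u‖ = 1 ∧ ∀ t : ℝ, 0 ≤ t → ‖(a - b) + t • u‖ = ‖a - b‖ + t := by
    by_cases hab : a = b
    · refine ⟨EuclideanSpace.single 0 1, by simp, fun t ht => ?_⟩
      simp [hab, norm_smul, abs_of_nonneg ht, EuclideanSpace.norm_single]
    · have hn : (0:ℝ) < ‖a - b‖ := by
        simpa [sub_eq_zero] using (norm_pos_iff.mpr (sub_ne_zero.mpr hab))
      refine ⟨‖a - b‖⁻¹ • (a - b), by simp [norm_smul, abs_of_nonneg (inv_nonneg.mpr hn.le),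
        inv_mul_cancel₀ hn.ne'], fun t ht => ?_⟩
      have : (a - b) + t • ‖a - b‖⁻¹ • (a - b) = (1 + t * ‖a - b‖⁻¹) • (a - b) := by
        rw [smul_smul, add_smul, one_smul]
      rw [this, norm_smul]
      have h1 : (0:ℝ) ≤ 1 + t * ‖a - b‖⁻¹ := by positivity
      rw [Real.norm_eq_abs, abs_of_nonneg h1]
      field_simp
  have key : ∀ t, t < ra → t < rb - dist a b := by
    intro t ht
    rcases le_or_gt 0 t with ht0 | ht0
    · have hmem : a + t • u ∈ ball a ra := by
        simp [mem_ball, dist_eq_norm, norm_smul, abs_of_nonneg ht0, hu, ht]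
      have := h hmem
      rw [mem_ball, dist_eq_norm] at this
      have heq : a + t • u - b = (a - b) + t • u := by abel
      rw [heq, hsum t ht0] at this
      rw [dist_eq_norm]
      linarith
    · have hmem : a ∈ ball a ra := mem_ball_self hra
      have := h hmem
      rw [mem_ball] at this
      linarith
  have := le_of_forall_lt key
  linarith

/-- An increasing union of open balls in `ℝ²` with bounded radii and positive finite
measure is an open ball. -/
theorem stmt9 (x : ℕ → E) (r : ℕ → ℝ) (hr : ∀ k, 0 < r k)
    (hmono : ∀ k, ball (x k) (r k) ⊆ ball (x (k + 1)) (r (k + 1)))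
    (hbdd : BddAbove (Set.range r))
    (hpos : 0 < volume (⋃ k, ball (x k) (r k)))
    (hfin : volume (⋃ k, ball (x k) (r k)) < ⊤) :
    ∃ (x₀ : E) (r₀ : ℝ), 0 < r₀ ∧ (⋃ k, ball (x k) (r k)) = ball x₀ r₀ := by
  have hsub : ∀ k j, k ≤ j → ball (x k) (r k) ⊆ ball (x j) (r j) := by
    intro k j hkj
    induction j with
    | zero => simp [Nat.le_zero.mp hkj]
    | succ n ih =>
      rcases Nat.lt_or_ge k (n+1) with h | h
      · exact (ih (Nat.lt_succ_iff.mp h)).trans (hmono n)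
      · have : k = n + 1 := le_antisymm hkj h
        simp [this]
  have hd : ∀ k j, k ≤ j → dist (x k) (x j) + r k ≤ r j := fun k j hkj =>
    key_ball_sub (hr k) (hsub k j hkj)
  -- radii: monotone and converging to the sup
  have hrmono : Monotone r := monotone_nat_of_le_succ fun k => by
    have := hd k (k+1) (Nat.le_succ k); have := dist_nonneg (x := x k) (y := x (k+1)); linarith
  set r₀ := ⨆ k, r k with hr₀
  have hrtend : Filter.Tendsto r Filter.atTop (nhds r₀) :=
    tendsto_atTop_ciSup hrmono (by simpa [Set.range] using hbdd)
  have hrle : ∀ k, r k ≤ r₀ := fun k => le_ciSup (by simpa using hbdd) k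
  have hr₀pos : 0 < r₀ := lt_of_lt_of_le (hr 0) (hrle 0)
  -- centers form a Cauchy sequence
  have hdist : ∀ N n m, N ≤ n → N ≤ m → dist (x n) (x m) ≤ r₀ - r N := by
    intro N n m hn hm
    rcases le_total n m with h | h
    · have := hd n m h; have := hrmono hn; have := hrle m; linarith
    · have := hd m n h; have := hrmono hm; have := hrle n;
      rw [dist_comm]; linarith
  have hcauchy : CauchySeq x := by
    apply cauchySeq_of_le_tendsto_0 (fun N => r₀ - r N)
    · intro n m N hn hm; exact hdist N n m hn hm
    · have : Filter.Tendsto (fun N => r₀ - r N) Filter.atTop (nhds (r₀ - r₀)) :=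
        Filter.Tendsto.sub tendsto_const_nhds hrtend
      simpa using this
  obtain ⟨x₀, hx₀⟩ := cauchySeq_tendsto_of_complete hcauchy
  -- the key distance estimate to the limit
  have hdx : ∀ k, dist (x k) x₀ ≤ r₀ - r k := by
    intro k
    have h1 : Filter.Tendsto (fun j => dist (x k) (x j)) Filter.atTop (nhds (dist (x k) x₀)) :=
      (Continuous.tendsto (continuous_dist.comp (continuous_const.prodMk continuous_id)) x₀).comp hx₀
    have h2 : Filter.Tendsto (fun j => r j - r k) Filter.atTop (nhds (r₀ - r k)) :=
      hrtend.sub tendsto_const_nhds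
    refine le_of_tendsto_of_tendsto h1 h2 ?_
    filter_upwards [Filter.eventually_ge_atTop k] with j hj
    have := hd k j hj
    linarith
  refine ⟨x₀, r₀, hr₀pos, ?_⟩
  apply Set.Subset.antisymm
  · intro y hy
    obtain ⟨k, hk⟩ := Set.mem_iUnion.mp hy
    rw [mem_ball] at hk ⊢
    calc dist y x₀ ≤ dist y (x k) + dist (x k) x₀ := dist_triangle _ _ _
      _ < r k + (r₀ - r k) := by have := hdx k; linarith
      _ = r₀ := by ring
  · intro y hy
    rw [mem_ball] at hy
    have hlt : (dist y x₀ + r₀) / 2 < r₀ := by linarith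
    obtain ⟨k, hk⟩ := (hrtend.eventually (eventually_gt_nhds hlt)).exists
    refine Set.mem_iUnion.mpr ⟨k, ?_⟩
    rw [mem_ball]
    have := hdx k
    have := dist_triangle y x₀ (x k)
    rw [dist_comm x₀ (x k)] at this
    have h0 := dist_nonneg (x := y) (y := x₀)
    linarith
end

section
/- Rigidity of centers under constant normal derivative: let u be a C¹ function on an open set in ℝ² such that for each t in an open interval (a,b), the superlevel set {u > t} is an open ball B(x(t), ρ(t)), with x and ρ differentiable at t₀ ∈ (a,b), and suppose |∇u| is constant on ∂B(x(t₀), ρ(t₀)) with ∇u(p) = -|∇u(p)| ν(p) for p on that circle (ν the outer normal). If for z = x'(t₀)/|x'(t₀)| the points P(t) = x(t) + ρ(t)z and Q(t) = x(t) - ρ(t)z satisfy u(P(t)) = u(Q(t)) = t for all t ∈ (a,b), then x'(t₀) = 0. -/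
open MeasureTheory Metric Real Set

local notation "E" => EuclideanSpace ℝ (Fin 2)

/-- Rigidity of centers under constant normal derivative: if the superlevel sets of a `C¹`
function `u` are balls `B(x(t), ρ(t))`, `|∇u|` is constant on `∂B(x(t₀), ρ(t₀))` with
`∇u(p) = −|∇u(p)| ν(p)` there, and the points `P(t) = x(t) + ρ(t)z`, `Q(t) = x(t) − ρ(t)z`
(with `z = x'(t₀)/|x'(t₀)|`) satisfy `u(P(t)) = u(Q(t)) = t`, then `x'(t₀)` cannot be
nonzero. -/
theorem stmt12 (a b t₀ : ℝ) (ht₀ : t₀ ∈ Ioo a b)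
    (U : Set E) (hU : IsOpen U) (u : E → ℝ) (hu : ContDiffOn ℝ 1 u U)
    (x : ℝ → E) (ρ : ℝ → ℝ) (hρpos : 0 < ρ t₀)
    (hball : ∀ t ∈ Ioo a b, {p ∈ U | t < u p} = ball (x t) (ρ t))
    (y : E) (hy : y ≠ 0) (hx' : HasDerivAt x y t₀)
    (ρ' : ℝ) (hρ' : HasDerivAt ρ ρ' t₀)
    (hsph : sphere (x t₀) (ρ t₀) ⊆ U)
    (hgradnorm : ∀ p ∈ sphere (x t₀) (ρ t₀), ∀ q ∈ sphere (x t₀) (ρ t₀),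
      ‖gradient u p‖ = ‖gradient u q‖)
    (hgraddir : ∀ p ∈ sphere (x t₀) (ρ t₀),
      gradient u p = -(‖gradient u p‖ * (ρ t₀)⁻¹) • (p - x t₀))
    (hP : ∀ t ∈ Ioo a b, u (x t + ρ t • (‖y‖⁻¹ • y)) = t)
    (hQ : ∀ t ∈ Ioo a b, u (x t - ρ t • (‖y‖⁻¹ • y)) = t) :
    False := by
  set z : E := ‖y‖⁻¹ • y with hzdef
  have hy0 : ‖y‖ ≠ 0 := norm_ne_zero_iff.mpr hy
  have hz1 : ‖z‖ = 1 := by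
    rw [hzdef, norm_smul, norm_inv, norm_norm, inv_mul_cancel₀ hy0]
  have hρz : ‖ρ t₀ • z‖ = ρ t₀ := by
    rw [norm_smul, hz1, mul_one, Real.norm_eq_abs, abs_of_pos hρpos]
  -- P and Q on the sphere
  have hPsph : x t₀ + ρ t₀ • z ∈ sphere (x t₀) (ρ t₀) := by
    rw [mem_sphere_iff_norm, add_sub_cancel_left, hρz]
  have hQsph : x t₀ - ρ t₀ • z ∈ sphere (x t₀) (ρ t₀) := by
    rw [mem_sphere_iff_norm, sub_sub_cancel_left, norm_neg, hρz]
  -- gradients at P and Q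
  set c : ℝ := ‖gradient u (x t₀ + ρ t₀ • z)‖ with hc
  have hcQ : ‖gradient u (x t₀ - ρ t₀ • z)‖ = c :=
    hgradnorm _ hQsph _ hPsph
  have hρne : (ρ t₀) ≠ 0 := ne_of_gt hρpos
  have hgradP : gradient u (x t₀ + ρ t₀ • z) = (-c) • z := by
    rw [hgraddir _ hPsph, add_sub_cancel_left, smul_smul, ← hc]
    congr 1
    field_simp
  have hgradQ : gradient u (x t₀ - ρ t₀ • z) = c • z := by
    rw [hgraddir _ hQsph, sub_sub_cancel_left, hcQ, smul_neg, smul_smul, ← neg_smul]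
    congr 1
    field_simp
  -- differentiability of u at P and Q
  have hdiffP : HasGradientAt u ((-c) • z) (x t₀ + ρ t₀ • z) := by
    have hd : DifferentiableAt ℝ u (x t₀ + ρ t₀ • z) :=
      (hu.contDiffAt (hU.mem_nhds (hsph hPsph))).differentiableAt one_ne_zero
    have := DifferentiableAt.hasGradientAt hd
    rwa [hgradP] at this
  have hdiffQ : HasGradientAt u (c • z) (x t₀ - ρ t₀ • z) := by
    have hd : DifferentiableAt ℝ u (x t₀ - ρ t₀ • z) :=
      (hu.contDiffAt (hU.mem_nhds (hsph hQsph))).differentiableAt one_ne_zero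
    have := DifferentiableAt.hasGradientAt hd
    rwa [hgradQ] at this
  -- derivative of t ↦ P t and composition
  have hPderiv : HasDerivAt (fun t => x t + ρ t • z) (y + ρ' • z) t₀ :=
    hx'.add (hρ'.smul_const z)
  have hQderiv : HasDerivAt (fun t => x t - ρ t • z) (y - ρ' • z) t₀ :=
    hx'.sub (hρ'.smul_const z)
  have hmem : Ioo a b ∈ nhds t₀ := Ioo_mem_nhds ht₀.1 ht₀.2
  have hcompP : HasDerivAt (fun t => u (x t + ρ t • z))
      (inner ℝ ((-c) • z) (y + ρ' • z) : ℝ) t₀ := by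
    have h := hdiffP.hasFDerivAt.comp_hasDerivAt t₀ hPderiv
    rw [show ((InnerProductSpace.toDual ℝ _ ((-c) • z)) (y + ρ' • z))
        = (inner ℝ ((-c) • z) (y + ρ' • z) : ℝ) from InnerProductSpace.toDual_apply_apply] at h
    exact h
  have hcompQ : HasDerivAt (fun t => u (x t - ρ t • z))
      (inner ℝ (c • z) (y - ρ' • z) : ℝ) t₀ := by
    have h := hdiffQ.hasFDerivAt.comp_hasDerivAt t₀ hQderiv
    rw [show ((InnerProductSpace.toDual ℝ _ (c • z)) (y - ρ' • z))
        = (inner ℝ (c • z) (y - ρ' • z) : ℝ) from InnerProductSpace.toDual_apply_apply] at h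
    exact h
  -- these functions equal id near t₀, so derivative is 1
  have hidP : HasDerivAt (fun t => u (x t + ρ t • z)) 1 t₀ := by
    refine (hasDerivAt_id t₀).congr_of_eventuallyEq ?_
    filter_upwards [hmem] with t ht using (hP t ht)
  have hidQ : HasDerivAt (fun t => u (x t - ρ t • z)) 1 t₀ := by
    refine (hasDerivAt_id t₀).congr_of_eventuallyEq ?_
    filter_upwards [hmem] with t ht using (hQ t ht)
  have e1 : (inner ℝ ((-c) • z) (y + ρ' • z) : ℝ) = 1 := hcompP.unique hidP
  have e2 : (inner ℝ (c • z) (y - ρ' • z) : ℝ) = 1 := hcompQ.unique hidQ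
  -- compute inner products
  have hzy : (inner ℝ z y : ℝ) = ‖y‖ := by
    rw [hzdef, real_inner_smul_left, real_inner_self_eq_norm_sq]
    field_simp
  have hzz : (inner ℝ z z : ℝ) = 1 := by
    rw [real_inner_self_eq_norm_sq, hz1]; norm_num
  rw [real_inner_smul_left, inner_add_right, real_inner_smul_right, hzy, hzz] at e1
  rw [real_inner_smul_left, inner_sub_right, real_inner_smul_right, hzy, hzz] at e2
  -- e1: -c * (‖y‖ + ρ') = 1, e2: c * (‖y‖ - ρ') = 1
  have h1 : c * ‖y‖ = 0 := by linear_combination (e2 - e1) / 2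
  have hc0 : c = 0 := (mul_eq_zero.mp h1).resolve_right hy0
  rw [hc0] at e2
  linarith
end
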